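/- There exist constants ε₀ ∈ (0,1) and C > 0 such that the following holds: for every directed graph G = ([s], E) in which every vertex has its in-degree equal to its out-degree (d_i⁺ = d_i⁻ for all i), with α = d_min⁺/s > 1/2 and ε = (d_max⁺ − d_min⁺)/d_min⁺ ≤ ε₀, the greatest two singular values σ₁ ≥ σ₂ of the equal-neighbor adjacency matrix A of G satisfy σ₁² ≤ 1 + ε + Cε² and σ₂² ≤ (1/α − 1)² + 2ε(1 + 2/α − 1/α²) + Cε². -/

import Mathlib

open Finset Matrix

/-- The out-degree of vertex `j`: the number of `i` with an edge from `j` to `i`. -/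
def outDeg {n : ℕ} (E : Fin n → Fin n → Bool) (j : Fin n) : ℕ :=
  (Finset.univ.filter fun i => E j i = true).card

/-- The in-degree of vertex `j`: the number of `i` with an edge from `i` to `j`. -/
def inDeg {n : ℕ} (E : Fin n → Fin n → Bool) (j : Fin n) : ℕ :=
  (Finset.univ.filter fun i => E i j = true).card

/-- Minimum out-degree. -/
noncomputable def dminOut {n : ℕ} (E : Fin n → Fin n → Bool) : ℕ := sInf (Set.range (outDeg E))

/-- Maximum out-degree. -/
noncomputable def dmaxOut {n : ℕ} (E : Fin n → Fin n → Bool) : ℕ := sSup (Set.range (outDeg E))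

/-- Maximum in-degree. -/
noncomputable def dmaxIn {n : ℕ} (E : Fin n → Fin n → Bool) : ℕ := sSup (Set.range (inDeg E))

/-- The equal-neighbor adjacency matrix: `A i j = 1 / d_j⁺` if there is an edge from `j`
to `i`, and `0` otherwise. -/
noncomputable def eqNbrMatrix {n : ℕ} (E : Fin n → Fin n → Bool) :
    Matrix (Fin n) (Fin n) ℝ :=
  fun i j => if E j i = true then (outDeg E j : ℝ)⁻¹ else 0

/-- The `k`-th largest value (counted with multiplicity, `k = 0` being the largest) of a
real-valued function on a finite index type; junk value `0` if `k ≥ card ι`. -/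
noncomputable def kthLargest {ι : Type*} [Fintype ι] (f : ι → ℝ) (k : ℕ) : ℝ :=
  if k < Fintype.card ι then
    ((Finset.univ.val.map f).sort (· ≤ ·)).getD (Fintype.card ι - 1 - k) 0
  else 0

/-- The `k`-th largest singular value of a real square matrix (`k = 0` is the largest),
i.e. the `k`-th largest square root of an eigenvalue of `AᴴA`. -/
noncomputable def sval {ι : Type*} [Fintype ι] [DecidableEq ι] (A : Matrix ι ι ℝ) (k : ℕ) : ℝ :=
  kthLargest (fun i => Real.sqrt ((Matrix.isHermitian_conjTranspose_mul_self A).eigenvalues i)) k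

/-!
With `M = AᵀA`, the squared singular values of `A` are the eigenvalues of `M`. The matrix `A`
has unit column sums and, since in-degrees equal out-degrees, row sums at most
`d_max⁺ / d_min⁺ = 1 + ε`; hence `M` is a nonnegative symmetric matrix with row sums at most
`1 + ε`, and the Schur test bounds its quadratic form, so `σ₁² ≤ 1 + ε`.

Two out-neighbourhoods of size `> s/2` share at least `2 d_min⁺ - s` vertices, so every entry of
`M` is at least `m₀ = (2 d_min⁺ - s) / (d_max⁺)²`. On `𝟙^⊥` the quadratic form of `M` is that of
`M - m₀ J`, whose row sums are at most `1 + ε - s m₀`. The span of two orthonormal eigenvectors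
meets `𝟙^⊥`, so `σ₂² ≤ 1 + ε - s m₀`, which is below the claimed bound with `C = 1`.
-/

lemma kthLargest_comp_equiv {ι : Type*} [Fintype ι] {n : ℕ} {g : Fin n → ℝ} (hg : Antitone g)
    (e : ι ≃ Fin n) (k : Fin n) : kthLargest (g ∘ e) k = g k := by
  obtain rfl : Fintype.card ι = n := by simpa using Fintype.card_congr e
  have hsort : (Finset.univ.val.map (g ∘ e)).sort (· ≤ ·) = (List.ofFn g).reverse := by
    have hmap : Finset.univ.val.map (g ∘ e) = (List.ofFn g : Multiset ℝ) := by
      rw [← Multiset.map_map, Multiset.map_univ_val_equiv, Fin.univ_val_map]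
    refine List.Perm.eq_of_sortedLE ?_ ?_ ?_
    · exact (List.sortedLE_iff_pairwise).mpr (Multiset.pairwise_sort _ _)
    · rw [List.sortedLE_iff_pairwise, List.pairwise_reverse]
      exact List.pairwise_ofFn.mpr fun i j hij => hg hij.le
    · rw [← Multiset.coe_eq_coe, Multiset.sort_eq, hmap, Multiset.coe_reverse]
  rw [kthLargest, if_pos k.is_lt, hsort, List.getD_eq_getElem _ _ (by simp; omega),
    List.getElem_reverse]
  simp only [List.getElem_ofFn]
  congr 1
  ext
  simp only [List.length_ofFn]
  omega

section SingularValues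

variable {ι : Type*} [Fintype ι] [DecidableEq ι] (A : Matrix ι ι ℝ)

lemma sq_sval_eq_eigenvalues₀ (k : Fin (Fintype.card ι)) :
    sval A k ^ 2 = (isHermitian_conjTranspose_mul_self A).eigenvalues₀ k := by
  set hA := isHermitian_conjTranspose_mul_self A
  set e : Fin (Fintype.card ι) ≃ ι := Fintype.equivOfCardEq (Fintype.card_fin _)
  have hnonneg : 0 ≤ hA.eigenvalues₀ k := by
    simpa only [IsHermitian.eigenvalues, e, Equiv.symm_apply_apply] using
      eigenvalues_conjTranspose_mul_self_nonneg A (e k)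
  have hcomp : (fun i => √(hA.eigenvalues i)) = (Real.sqrt ∘ hA.eigenvalues₀) ∘ e.symm := rfl
  rw [sval, hcomp,
    kthLargest_comp_equiv (Real.sqrt_monotone.comp_antitone hA.eigenvalues₀_antitone),
    Function.comp_apply, Real.sq_sqrt hnonneg]

lemma sq_sval_zero_le (hι : 0 < Fintype.card ι) {c : ℝ}
    (h : ∀ i, (isHermitian_conjTranspose_mul_self A).eigenvalues i ≤ c) : sval A 0 ^ 2 ≤ c := by
  rw [show (0 : ℕ) = (⟨0, hι⟩ : Fin _) from rfl, sq_sval_eq_eigenvalues₀]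
  simpa only [IsHermitian.eigenvalues, Equiv.symm_apply_apply] using
    h (Fintype.equivOfCardEq (Fintype.card_fin _) ⟨0, hι⟩)

lemma sq_sval_one_le {c : ℝ} (hc : 0 ≤ c)
    (h : ∀ i j, i ≠ j → min ((isHermitian_conjTranspose_mul_self A).eigenvalues i)
      ((isHermitian_conjTranspose_mul_self A).eigenvalues j) ≤ c) : sval A 1 ^ 2 ≤ c := by
  set hA := isHermitian_conjTranspose_mul_self A
  rcases lt_or_ge 1 (Fintype.card ι) with hι | hι
  · set e : Fin (Fintype.card ι) ≃ ι := Fintype.equivOfCardEq (Fintype.card_fin _)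
    have hmin := h (e ⟨0, by omega⟩) (e ⟨1, hι⟩) (e.injective.ne (by simp))
    simp only [IsHermitian.eigenvalues, e, Equiv.symm_apply_apply] at hmin
    have hanti := hA.eigenvalues₀_antitone (show (⟨0, by omega⟩ : Fin _) ≤ ⟨1, hι⟩ by simp)
    rw [show (1 : ℕ) = (⟨1, hι⟩ : Fin _) from rfl, sq_sval_eq_eigenvalues₀, ← min_eq_right hanti]
    exact hmin
  · -- `sval A 1` is the junk value `0` when `A` has fewer than two rows
    rw [sval, kthLargest, if_neg (by omega)]
    simpa using hc

end SingularValues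

namespace Matrix

section SchurTest

variable {ι : Type*} [Fintype ι] {M : Matrix ι ι ℝ}

lemma dotProduct_mulVec_le_of_sum_le (hsymm : M.IsSymm) (hnonneg : ∀ j k, 0 ≤ M j k)
    {c : ℝ} (hrow : ∀ j, ∑ k, M j k ≤ c) (x : ι → ℝ) : x ⬝ᵥ M *ᵥ x ≤ c * (x ⬝ᵥ x) := by
  have hamgm :
      2 * (x ⬝ᵥ M *ᵥ x) ≤ ∑ j, ∑ k, M j k * x j ^ 2 + ∑ j, ∑ k, M j k * x k ^ 2 := by
    simp only [dotProduct, mulVec, Finset.mul_sum, ← Finset.sum_add_distrib]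
    gcongr with j _ k _
    nlinarith [mul_nonneg (hnonneg j k) (sq_nonneg (x j - x k))]
  have hswap : ∑ j, ∑ k, M j k * x k ^ 2 = ∑ j, ∑ k, M j k * x j ^ 2 := by
    rw [Finset.sum_comm]
    simp only [hsymm.apply]
  have hrowx : ∑ j, ∑ k, M j k * x j ^ 2 ≤ c * (x ⬝ᵥ x) := by
    simp only [← Finset.sum_mul, dotProduct, Finset.mul_sum, ← sq]
    gcongr with j
    exact hrow j
  linarith

lemma dotProduct_mulVec_le_of_sum_le_of_le_apply (hsymm : M.IsSymm) {m₀ c : ℝ}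
    (hlow : ∀ j k, m₀ ≤ M j k) (hrow : ∀ j, ∑ k, M j k ≤ c) {x : ι → ℝ} (hx : x ⬝ᵥ 1 = 0) :
    x ⬝ᵥ M *ᵥ x ≤ (c - Fintype.card ι * m₀) * (x ⬝ᵥ x) := by
  set J : Matrix ι ι ℝ := of fun _ _ => m₀
  have hJx : J *ᵥ x = 0 := by
    rw [dotProduct_one] at hx
    ext j
    simp [J, mulVec, dotProduct, ← Finset.mul_sum, hx]
  have hshift := (M - J).dotProduct_mulVec_le_of_sum_le (hsymm.sub rfl)
    (fun j k => sub_nonneg.mpr (hlow j k)) (c := c - Fintype.card ι * m₀)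
    (fun j => by simpa [J, Finset.sum_sub_distrib] using hrow j) x
  simpa [sub_mulVec, hJx] using hshift

end SchurTest

lemma sum_transpose_mul_self_apply_le {κ ι : Type*} [Fintype κ] [Fintype ι]
    {A : Matrix κ ι ℝ} (hnonneg : ∀ i j, 0 ≤ A i j) (hcol : ∀ j, ∑ i, A i j = 1) {r : ℝ}
    (hrow : ∀ i, ∑ j, A i j ≤ r) (j : ι) : ∑ k, (Aᵀ * A) j k ≤ r :=
  calc ∑ k, (Aᵀ * A) j k = ∑ i, A i j * ∑ k, A i k := by
        simp only [mul_apply, transpose_apply, Finset.mul_sum]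
        exact Finset.sum_comm
    _ ≤ ∑ i, A i j * r := by gcongr with i; exacts [hnonneg i j, hrow i]
    _ = r := by rw [← Finset.sum_mul, hcol, one_mul]

section Spectral

variable {ι : Type*} [Fintype ι] [DecidableEq ι] {M : Matrix ι ι ℝ} (hM : M.IsHermitian)

lemma IsHermitian.eigenvectorBasis_dotProduct (i j : ι) :
    ⇑(hM.eigenvectorBasis i) ⬝ᵥ ⇑(hM.eigenvectorBasis j) = if i = j then 1 else 0 := by
  simpa [EuclideanSpace.inner_eq_star_dotProduct, eq_comm] using
    orthonormal_iff_ite.mp hM.eigenvectorBasis.orthonormal j i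

lemma IsHermitian.eigenvalues_le_of_dotProduct_mulVec_le {c : ℝ}
    (H : ∀ x, x ⬝ᵥ M *ᵥ x ≤ c * (x ⬝ᵥ x)) (i : ι) : hM.eigenvalues i ≤ c := by
  simpa [hM.mulVec_eigenvectorBasis, hM.eigenvectorBasis_dotProduct] using
    H (hM.eigenvectorBasis i)

lemma IsHermitian.min_eigenvalues_le_of_dotProduct_mulVec_le (w : ι → ℝ) {c : ℝ}
    (H : ∀ x, x ⬝ᵥ w = 0 → x ⬝ᵥ M *ᵥ x ≤ c * (x ⬝ᵥ x)) {i j : ι} (hij : i ≠ j) :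
    min (hM.eigenvalues i) (hM.eigenvalues j) ≤ c := by
  set v := ⇑(hM.eigenvectorBasis i)
  set u := ⇑(hM.eigenvectorBasis j)
  have hcomb : ∀ p q : ℝ, (p • v + q • u) ⬝ᵥ w = 0 →
      (p ^ 2 + q ^ 2) * min (hM.eigenvalues i) (hM.eigenvalues j) ≤ c * (p ^ 2 + q ^ 2) := by
    intro p q hw
    have h := H _ hw
    simp only [mulVec_add, mulVec_smul, hM.mulVec_eigenvectorBasis, dotProduct_add,
      add_dotProduct, dotProduct_smul, smul_dotProduct, v, u, hM.eigenvectorBasis_dotProduct,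
      if_neg hij, if_neg hij.symm, if_pos, smul_eq_mul] at h
    ring_nf at h ⊢
    nlinarith [min_le_left (hM.eigenvalues i) (hM.eigenvalues j),
      min_le_right (hM.eigenvalues i) (hM.eigenvalues j), sq_nonneg p, sq_nonneg q]
  obtain ⟨p, q, hpq, hw⟩ : ∃ p q : ℝ, 0 < p ^ 2 + q ^ 2 ∧ (p • v + q • u) ⬝ᵥ w = 0 := by
    by_cases h : v ⬝ᵥ w = 0 ∧ u ⬝ᵥ w = 0
    · exact ⟨1, 0, by norm_num, by simp [h.1]⟩
    · refine ⟨u ⬝ᵥ w, -(v ⬝ᵥ w), ?_, ?_⟩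
      · rw [neg_sq]
        rcases not_and_or.mp h with h | h
        · exact add_pos_of_nonneg_of_pos (sq_nonneg _) (sq_pos_of_ne_zero h)
        · exact add_pos_of_pos_of_nonneg (sq_pos_of_ne_zero h) (sq_nonneg _)
      · simp only [add_dotProduct, smul_dotProduct, smul_eq_mul]
        ring
  exact le_of_mul_le_mul_left (by linarith [hcomb p q hw]) hpq

end Spectral

end Matrix

lemma inv_sub_one_sq_add_mul_add_sq_nonneg {α ε : ℝ} (hα : 1 / 2 < α) (hε : 0 ≤ ε) :
    0 ≤ (1 / α - 1) ^ 2 + 2 * ε * (1 + 2 / α - 1 / α ^ 2) + ε ^ 2 := by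
  obtain ⟨a, ha₀, ha₂, rfl⟩ : ∃ a, 0 < a ∧ a < 2 ∧ α = 1 / a :=
    ⟨1 / α, by positivity, by rw [div_lt_iff₀ (by linarith)]; linarith, by field_simp⟩
  have hP : 0 ≤ 1 + 2 * a - a ^ 2 := by nlinarith
  simp only [div_div_eq_mul_div, _root_.one_div_pow, div_one, one_mul]
  positivity

lemma one_add_sub_div_sq_le {α ε : ℝ} (hα : 1 / 2 < α) (hε : 0 ≤ ε) :
    1 + ε - (2 * α - 1) / (α * (1 + ε)) ^ 2 ≤
      (1 / α - 1) ^ 2 + 2 * ε * (1 + 2 / α - 1 / α ^ 2) + ε ^ 2 := by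
  obtain ⟨a, ha₀, ha₂, rfl⟩ : ∃ a, 0 < a ∧ a < 2 ∧ α = 1 / a :=
    ⟨1 / α, by positivity, by rw [div_lt_iff₀ (by linarith)]; linarith, by field_simp⟩
  have hP : 0 ≤ a * (2 - a) := mul_nonneg ha₀.le (by linarith)
  have hrw : (2 * (1 / a) - 1) / (1 / a * (1 + ε)) ^ 2 = a * (2 - a) / (1 + ε) ^ 2 := by
    field_simp
  have hdiv : a * (2 - a) * (1 - 2 * ε) ≤ a * (2 - a) / (1 + ε) ^ 2 := by
    rw [le_div_iff₀ (by positivity)]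
    nlinarith [mul_nonneg hP (show 0 ≤ 3 * ε ^ 2 + 2 * ε ^ 3 by positivity)]
  simp only [hrw, div_div_eq_mul_div, _root_.one_div_pow, div_one, one_mul]
  nlinarith

section Digraph

variable {n : ℕ} (E : Fin n → Fin n → Bool)

lemma dminOut_le_outDeg (j : Fin n) : dminOut E ≤ outDeg E j :=
  Nat.sInf_le ⟨j, rfl⟩

lemma outDeg_le_dmaxOut (j : Fin n) : outDeg E j ≤ dmaxOut E :=
  le_csSup (Set.finite_range _).bddAbove ⟨j, rfl⟩

lemma outDeg_add_outDeg_le (j k : Fin n) :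
    outDeg E j + outDeg E k ≤ n + #{i | E j i = true ∧ E k i = true} := by
  rw [outDeg, outDeg, filter_and, ← card_union_add_card_inter]
  gcongr
  exact (card_le_univ _).trans (by simp)

lemma eqNbrMatrix_nonneg (i j : Fin n) : 0 ≤ eqNbrMatrix E i j := by
  unfold eqNbrMatrix
  split_ifs <;> positivity

lemma inv_dmaxOut_le_eqNbrMatrix {i j : Fin n} (hj : 0 < outDeg E j) (hji : E j i = true) :
    (dmaxOut E : ℝ)⁻¹ ≤ eqNbrMatrix E i j := by
  rw [eqNbrMatrix, if_pos hji]
  exact inv_anti₀ (by exact_mod_cast hj) (by exact_mod_cast outDeg_le_dmaxOut E j)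

lemma sum_eqNbrMatrix_col {j : Fin n} (hj : 0 < outDeg E j) :
    ∑ i, eqNbrMatrix E i j = 1 := by
  simp only [eqNbrMatrix]
  rw [← sum_filter, sum_const, nsmul_eq_mul]
  exact mul_inv_cancel₀ (by exact_mod_cast hj.ne')

lemma sum_eqNbrMatrix_row_le (hmin : 0 < dminOut E) (i : Fin n) :
    ∑ j, eqNbrMatrix E i j ≤ inDeg E i / dminOut E :=
  calc ∑ j, eqNbrMatrix E i j ≤ ∑ j, if E j i = true then (dminOut E : ℝ)⁻¹ else 0 := by
        gcongr with j
        unfold eqNbrMatrix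
        split_ifs
        exacts [inv_anti₀ (by exact_mod_cast hmin) (by exact_mod_cast dminOut_le_outDeg E j),
          le_rfl]
    _ = inDeg E i / dminOut E := by
        rw [← sum_filter, sum_const, nsmul_eq_mul, div_eq_mul_inv]
        rfl

lemma le_transpose_eqNbrMatrix_mul_apply (hdeg : ∀ j, 0 < outDeg E j) (j k : Fin n) :
    (2 * dminOut E - n) / dmaxOut E ^ 2 ≤ ((eqNbrMatrix E)ᵀ * eqNbrMatrix E) j k := by
  set common : Finset (Fin n) := {i | E j i = true ∧ E k i = true}
  have hcommon : 2 * (dminOut E : ℝ) - n ≤ #common := by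
    have h : (outDeg E j + outDeg E k : ℝ) ≤ n + #common := by
      exact_mod_cast outDeg_add_outDeg_le E j k
    have hj : (dminOut E : ℝ) ≤ outDeg E j := by exact_mod_cast dminOut_le_outDeg E j
    have hk : (dminOut E : ℝ) ≤ outDeg E k := by exact_mod_cast dminOut_le_outDeg E k
    linarith
  calc (2 * dminOut E - n) / dmaxOut E ^ 2
        ≤ ∑ _i ∈ common, (dmaxOut E : ℝ)⁻¹ * (dmaxOut E : ℝ)⁻¹ := by
        rw [sum_const, nsmul_eq_mul, ← sq, inv_pow, ← div_eq_mul_inv]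
        gcongr
    _ ≤ ∑ i ∈ common, eqNbrMatrix E i j * eqNbrMatrix E i k := by
        refine sum_le_sum fun i hi => ?_
        obtain ⟨hji, hki⟩ := (mem_filter.mp hi).2
        exact mul_le_mul (inv_dmaxOut_le_eqNbrMatrix E (hdeg j) hji)
          (inv_dmaxOut_le_eqNbrMatrix E (hdeg k) hki) (by positivity) (eqNbrMatrix_nonneg E i j)
    _ ≤ ((eqNbrMatrix E)ᵀ * eqNbrMatrix E) j k := by
        rw [mul_apply]
        exact sum_le_sum_of_subset_of_nonneg (subset_univ _)
          fun i _ _ => mul_nonneg (eqNbrMatrix_nonneg E i j) (eqNbrMatrix_nonneg E i k)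

lemma sum_transpose_eqNbrMatrix_mul_apply_le (hdeg : ∀ j, 0 < outDeg E j)
    (hio : ∀ i, inDeg E i = outDeg E i) (hmin : 0 < dminOut E) (j : Fin n) :
    ∑ k, ((eqNbrMatrix E)ᵀ * eqNbrMatrix E) j k ≤ dmaxOut E / dminOut E :=
  sum_transpose_mul_self_apply_le (eqNbrMatrix_nonneg E)
    (fun j => sum_eqNbrMatrix_col E (hdeg j))
    (fun i => (sum_eqNbrMatrix_row_le E hmin i).trans <| by
      gcongr
      exact_mod_cast hio i ▸ outDeg_le_dmaxOut E i) j

lemma eigenvalues_gram_eqNbrMatrix_le (hdeg : ∀ j, 0 < outDeg E j)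
    (hio : ∀ i, inDeg E i = outDeg E i) (hmin : 0 < dminOut E) (i : Fin n) :
    (isHermitian_conjTranspose_mul_self (eqNbrMatrix E)).eigenvalues i ≤
      dmaxOut E / dminOut E := by
  refine IsHermitian.eigenvalues_le_of_dotProduct_mulVec_le _ ?_ i
  rw [conjTranspose_eq_transpose_of_trivial]
  exact dotProduct_mulVec_le_of_sum_le (isSymm_transpose_mul_self _)
    (fun j k => sum_nonneg fun i _ => mul_nonneg (eqNbrMatrix_nonneg E i j)
      (eqNbrMatrix_nonneg E i k))
    (sum_transpose_eqNbrMatrix_mul_apply_le E hdeg hio hmin)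

lemma min_eigenvalues_gram_eqNbrMatrix_le (hdeg : ∀ j, 0 < outDeg E j)
    (hio : ∀ i, inDeg E i = outDeg E i) (hmin : 0 < dminOut E) {i j : Fin n} (hij : i ≠ j) :
    min ((isHermitian_conjTranspose_mul_self (eqNbrMatrix E)).eigenvalues i)
        ((isHermitian_conjTranspose_mul_self (eqNbrMatrix E)).eigenvalues j) ≤
      dmaxOut E / dminOut E - n * ((2 * dminOut E - n) / dmaxOut E ^ 2) := by
  refine IsHermitian.min_eigenvalues_le_of_dotProduct_mulVec_le _ 1 ?_ hij
  rw [conjTranspose_eq_transpose_of_trivial]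
  intro x hx
  simpa using dotProduct_mulVec_le_of_sum_le_of_le_apply (isSymm_transpose_mul_self _)
    (le_transpose_eqNbrMatrix_mul_apply E hdeg)
    (sum_transpose_eqNbrMatrix_mul_apply_le E hdeg hio hmin) hx

end Digraph

/-- There exist `ε₀ ∈ (0,1)` and `C > 0` such that for every digraph in which every vertex
has its in-degree equal to its out-degree, with `α = d_min⁺/s > 1/2` and
`ε = (d_max⁺ − d_min⁺)/d_min⁺ ≤ ε₀`, the two largest singular values of the equal-neighbor
adjacency matrix satisfy `σ₁² ≤ 1 + ε + Cε²` and
`σ₂² ≤ (1/α − 1)² + 2ε(1 + 2/α − 1/α²) + Cε²`. -/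
theorem stmt6 :
    ∃ ε₀ ∈ Set.Ioo (0 : ℝ) 1, ∃ C : ℝ, 0 < C ∧
      ∀ (s : ℕ), 0 < s → ∀ (E : Fin s → Fin s → Bool),
        (∀ j : Fin s, 0 < outDeg E j) →
        (∀ i : Fin s, inDeg E i = outDeg E i) →
        ∀ (α ε : ℝ),
          α = (dminOut E : ℝ) / s →
          ε = ((dmaxOut E : ℝ) - (dminOut E : ℝ)) / (dminOut E : ℝ) →
          1 / 2 < α → ε ≤ ε₀ →
          sval (eqNbrMatrix E) 0 ^ 2 ≤ 1 + ε + C * ε ^ 2 ∧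
          sval (eqNbrMatrix E) 1 ^ 2 ≤
            (1 / α - 1) ^ 2 + 2 * ε * (1 + 2 / α - 1 / α ^ 2) + C * ε ^ 2 := by
  refine ⟨1 / 2, ⟨by norm_num, by norm_num⟩, 1, one_pos, ?_⟩
  intro s hs E hdeg hio α ε hα hε hα2 _
  have hsR : (0 : ℝ) < s := by exact_mod_cast hs
  have hm : (s : ℝ) < 2 * dminOut E := by
    rw [hα, lt_div_iff₀ hsR] at hα2
    linarith
  have hmin : 0 < dminOut E := by exact_mod_cast (show (0 : ℝ) < dminOut E by linarith)
  have hmd : (dminOut E : ℝ) ≤ dmaxOut E := by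
    exact_mod_cast (dminOut_le_outDeg E ⟨0, hs⟩).trans (outDeg_le_dmaxOut E _)
  have hε0 : 0 ≤ ε := by rw [hε]; exact div_nonneg (sub_nonneg.mpr hmd) (by positivity)
  have hdm : (dmaxOut E : ℝ) / dminOut E = 1 + ε := by rw [hε]; field_simp; ring
  rw [one_mul]
  constructor
  · refine sq_sval_zero_le _ (by simpa) fun i => ?_
    calc _ ≤ (dmaxOut E : ℝ) / dminOut E := eigenvalues_gram_eqNbrMatrix_le E hdeg hio hmin i
      _ ≤ 1 + ε + ε ^ 2 := by rw [hdm]; exact le_add_of_nonneg_right (sq_nonneg ε)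
  · refine sq_sval_one_le _ (inv_sub_one_sq_add_mul_add_sq_nonneg hα2 hε0) fun i j hij => ?_
    calc _ ≤ _ := min_eigenvalues_gram_eqNbrMatrix_le E hdeg hio hmin hij
      _ = 1 + ε - (2 * α - 1) / (α * (1 + ε)) ^ 2 := by rw [hα, ← hdm]; field_simp
      _ ≤ _ := one_add_sub_div_sq_le hα2 hε0
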